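/- Let P be a finite poset with n elements and let (x_1, x_2, …, x_n) be any linear extension of P. Then order ideal rowmotion satisfies Row_J = t_{x_1} ∘ t_{x_2} ∘ ⋯ ∘ t_{x_n} (compositions applied right to left). -/

import Mathlib

open scoped Classical

variable {P : Type*} [PartialOrder P]

abbrev OrderIdealSub (P : Type*) [PartialOrder P] : Type _ := {I : Set P // IsLowerSet I}

abbrev AntichainSub (P : Type*) [PartialOrder P] : Type _ := {A : Set P // IsAntichain (· ≤ ·) A}

noncomputable def togFun (e : P) (I : OrderIdealSub P) : OrderIdealSub P :=
  if _h : e ∈ I.1 then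
    if h2 : IsLowerSet (I.1 \ {e}) then ⟨I.1 \ {e}, h2⟩ else I
  else
    if h2 : IsLowerSet (insert e I.1) then ⟨insert e I.1, h2⟩ else I

noncomputable def atogFun (e : P) (A : AntichainSub P) : AntichainSub P :=
  if _h : e ∈ A.1 then ⟨A.1 \ {e}, A.2.subset Set.diff_subset⟩
  else if h2 : IsAntichain (· ≤ ·) (insert e A.1) then ⟨insert e A.1, h2⟩
  else A

def idealOf (A : AntichainSub P) : OrderIdealSub P :=
  ⟨{x | ∃ y ∈ A.1, x ≤ y}, fun _a _b hba ha => by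
    obtain ⟨y, hy, h⟩ := ha
    exact ⟨y, hy, hba.trans h⟩⟩

def listComp {α : Type*} (fs : List (α → α)) : α → α := fs.foldr (· ∘ ·) id

theorem togFun_involutive (e : P) : Function.Involutive (togFun (P := P) e) := by
  intro I
  unfold togFun
  by_cases h : e ∈ I.1
  · rw [dif_pos h]
    by_cases h2 : IsLowerSet (I.1 \ {e})
    · rw [dif_pos h2]
      have hne : e ∉ (⟨I.1 \ {e}, h2⟩ : OrderIdealSub P).1 := fun hc => hc.2 rfl
      rw [dif_neg hne]
      have hins : insert e (I.1 \ {e}) = I.1 := by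
        rw [Set.insert_diff_singleton, Set.insert_eq_self.mpr h]
      have h3 : IsLowerSet (insert e ((⟨I.1 \ {e}, h2⟩ : OrderIdealSub P)).1) := by
        show IsLowerSet (insert e (I.1 \ {e})); rw [hins]; exact I.2
      rw [dif_pos h3]
      exact Subtype.ext hins
    · rw [dif_neg h2, dif_pos h, dif_neg h2]
  · rw [dif_neg h]
    by_cases h2 : IsLowerSet (insert e I.1)
    · rw [dif_pos h2]
      have hme : e ∈ (⟨insert e I.1, h2⟩ : OrderIdealSub P).1 := Set.mem_insert e I.1
      rw [dif_pos hme]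
      have hdel : (insert e I.1) \ {e} = I.1 := by
        rw [Set.insert_diff_self_of_notMem h]
      have h3 : IsLowerSet ((⟨insert e I.1, h2⟩ : OrderIdealSub P).1 \ {e}) := by
        show IsLowerSet ((insert e I.1) \ {e}); rw [hdel]; exact I.2
      rw [dif_pos h3]
      exact Subtype.ext hdel
    · rw [dif_neg h2, dif_neg h, dif_neg h2]

theorem atogFun_involutive (e : P) : Function.Involutive (atogFun (P := P) e) := by
  intro A
  unfold atogFun
  by_cases h : e ∈ A.1
  · rw [dif_pos h]
    have hne : e ∉ (⟨A.1 \ {e}, A.2.subset Set.diff_subset⟩ : AntichainSub P).1 :=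
      fun hc => hc.2 rfl
    rw [dif_neg hne]
    have hins : insert e (A.1 \ {e}) = A.1 := by
      rw [Set.insert_diff_singleton, Set.insert_eq_self.mpr h]
    have h2 : IsAntichain (· ≤ ·)
        (insert e ((⟨A.1 \ {e}, A.2.subset Set.diff_subset⟩ : AntichainSub P)).1) := by
      show IsAntichain (· ≤ ·) (insert e (A.1 \ {e})); rw [hins]; exact A.2
    rw [dif_pos h2]
    exact Subtype.ext hins
  · rw [dif_neg h]
    by_cases h2 : IsAntichain (· ≤ ·) (insert e A.1)
    · rw [dif_pos h2]
      have hme : e ∈ (⟨insert e A.1, h2⟩ : AntichainSub P).1 := Set.mem_insert e A.1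
      rw [dif_pos hme]
      have hdel : (insert e A.1) \ {e} = A.1 := by
        rw [Set.insert_diff_self_of_notMem h]
      exact Subtype.ext hdel
    · rw [dif_neg h2, dif_neg h, dif_neg h2]

noncomputable def togPerm (e : P) : Equiv.Perm (OrderIdealSub P) :=
  (togFun_involutive e).toPerm _

noncomputable def atogPerm (e : P) : Equiv.Perm (AntichainSub P) :=
  (atogFun_involutive e).toPerm _

def IsLinExtListOn (S : Set P) (l : List P) : Prop :=
  l.Nodup ∧ (∀ x : P, x ∈ l ↔ x ∈ S) ∧
    ∀ i j : Fin l.length, l.get i < l.get j → (i : ℕ) < (j : ℕ)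

noncomputable def RowJ (I : OrderIdealSub P) : OrderIdealSub P :=
  ⟨{x | ∃ m, (m ∉ I.1 ∧ ∀ z, z ∉ I.1 → z ≤ m → z = m) ∧ x ≤ m}, fun _a _b hba ha => by
    obtain ⟨m, hm, h⟩ := ha
    exact ⟨m, hm, hba.trans h⟩⟩

noncomputable def RowA (A : AntichainSub P) : AntichainSub P :=
  ⟨{x | x ∉ (idealOf A).1 ∧ ∀ z, z ∉ (idealOf A).1 → z ≤ x → z = x}, by
    intro a ha b hb hne hab
    exact hne (hb.2 a ha.1 hab)⟩

/-!
Toggle the elements of the linear extension from last to first. Once a suffix has been toggled,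
the current ideal agrees with `I` on the remaining prefix and with `Row(I)` on the suffix.
This persists because toggling and rowmotion obey the same local rule at `e`:
`e ∈ t_e J` iff some `a > e` lies in `J`, or `e ∉ J` and every `b < e` lies in `J`;
`e ∈ Row(I)` iff some `a > e` lies in `Row(I)`, or `e` is minimal outside `I`.
When `e` is toggled, the elements above it are already in their `Row(I)` state and the elements
below it are still in their `I` state, so the two rules give the same answer.
-/

theorem Set.mem_ite_of_mem {α : Type*} {t s s' : Set α} {x : α} (hx : x ∈ t) :
    x ∈ t.ite s s' ↔ x ∈ s := by
  simp [Set.ite, hx]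

theorem Set.mem_ite_of_notMem {α : Type*} {t s s' : Set α} {x : α} (hx : x ∉ t) :
    x ∈ t.ite s s' ↔ x ∈ s' := by
  simp [Set.ite, hx]

theorem listComp_cons {α : Type*} (f : α → α) (fs : List (α → α)) :
    listComp (f :: fs) = f ∘ listComp fs :=
  rfl

theorem mem_togFun_of_ne {e x : P} (J : OrderIdealSub P) (hx : x ≠ e) :
    x ∈ (togFun e J).1 ↔ x ∈ J.1 := by
  unfold togFun
  split_ifs <;> simp [hx]

theorem mem_togFun_self (e : P) (J : OrderIdealSub P) :
    e ∈ (togFun e J).1 ↔ (∃ a, e < a ∧ a ∈ J.1) ∨ (e ∉ J.1 ∧ ∀ b < e, b ∈ J.1) := by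
  unfold togFun
  split_ifs with he hdel hins
  · refine iff_of_false (fun h => h.2 rfl) ?_
    rintro (⟨a, hea, haJ⟩ | ⟨he', -⟩)
    · exact (hdel hea.le ⟨haJ, hea.ne'⟩).2 rfl
    · exact he' he
  · refine iff_of_true he (Or.inl ?_)
    by_contra! hmax
    refine hdel fun a b hba ha => ⟨J.2 hba ha.1, fun hb => ?_⟩
    rw [Set.mem_singleton_iff] at hb
    subst hb
    exact hmax a (lt_of_le_of_ne hba fun h => ha.2 h.symm) ha.1
  · refine iff_of_true (Set.mem_insert e J.1) (Or.inr ⟨he, fun b hb => ?_⟩)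
    exact (Set.mem_insert_iff.mp (hins hb.le (Set.mem_insert e J.1))).resolve_left hb.ne
  · refine iff_of_false he ?_
    rintro (⟨a, hea, haJ⟩ | ⟨-, hbelow⟩)
    · exact he (J.2 hea.le haJ)
    · refine hins fun a b hba ha => ?_
      rcases ha with rfl | ha
      · rcases hba.eq_or_lt with rfl | hlt
        · exact Set.mem_insert b J.1
        · exact Or.inr (hbelow b hlt)
      · exact Or.inr (J.2 hba ha)

theorem mem_rowJ_iff (I : OrderIdealSub P) (e : P) :
    e ∈ (RowJ I).1 ↔ (∃ a, e < a ∧ a ∈ (RowJ I).1) ∨ (e ∉ I.1 ∧ ∀ b < e, b ∈ I.1) := by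
  constructor
  · rintro ⟨m, ⟨hmI, hmin⟩, hem⟩
    rcases hem.eq_or_lt with rfl | hlt
    · exact Or.inr ⟨hmI, fun b hb => by_contra fun hbI => hb.ne (hmin b hbI hb.le)⟩
    · exact Or.inl ⟨m, hlt, m, ⟨hmI, hmin⟩, le_rfl⟩
  · rintro (⟨a, hea, haR⟩ | ⟨heI, hbelow⟩)
    · exact (RowJ I).2 hea.le haR
    · refine ⟨e, ⟨heI, fun z hzI hze => ?_⟩, le_rfl⟩
      by_contra hne
      exact hzI (hbelow z (lt_of_le_of_ne hze hne))

theorem togFun_ite {I J : OrderIdealSub P} {T : Set P} {e : P} (he : e ∉ T)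
    (hbelow : ∀ b < e, b ∈ T) (habove : ∀ a, e < a → a ∉ T)
    (hJ : J.1 = (insert e T).ite I.1 (RowJ I).1) :
    (togFun e J).1 = T.ite I.1 (RowJ I).1 := by
  ext x
  by_cases hx : x = e
  · subst hx
    rw [mem_togFun_self, Set.mem_ite_of_notMem he, mem_rowJ_iff, hJ,
      Set.mem_ite_of_mem (Set.mem_insert x T)]
    refine or_congr (exists_congr fun a => and_congr_right fun hxa => ?_)
      (and_congr_right fun _ => forall₂_congr fun b hb => ?_)
    · exact Set.mem_ite_of_notMem fun ha => (Set.mem_insert_iff.mp ha).elim hxa.ne' (habove a hxa)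
    · exact Set.mem_ite_of_mem (Set.mem_insert_of_mem x (hbelow b hb))
  · rw [mem_togFun_of_ne J hx, hJ]
    simp [Set.ite, hx]

theorem listComp_togFun_ite (I J : OrderIdealSub P) (p s : List P) (hnd : (p ++ s).Nodup)
    (hsort : (p ++ s).Pairwise (fun a b => ¬ b < a)) (hlow : IsLowerSet {x | x ∈ p ++ s})
    (hJ : J.1 = {x | x ∈ p ++ s}.ite I.1 (RowJ I).1) :
    (listComp (s.map togFun) J).1 = {x | x ∈ p}.ite I.1 (RowJ I).1 := by
  induction s generalizing p with
  | nil => simpa [listComp] using hJ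
  | cons e s ih =>
    rw [List.map_cons, listComp_cons, Function.comp_apply]
    have hsplit : p ++ e :: s = (p ++ [e]) ++ s := by simp
    have hstep := ih (p ++ [e]) (hsplit ▸ hnd) (hsplit ▸ hsort) (hsplit ▸ hlow) (hsplit ▸ hJ)
    rw [List.nodup_append] at hnd
    rw [List.pairwise_append, List.pairwise_cons] at hsort
    refine togFun_ite (fun he => hnd.2.2 e he e List.mem_cons_self rfl) (fun b hb => ?_)
      (fun a hea ha => hsort.2.2 a ha e List.mem_cons_self hea) ?_
    · have hbs : b ∈ p ++ e :: s := hlow hb.le (by simp)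
      simp only [List.mem_append, List.mem_cons] at hbs
      rcases hbs with hbp | rfl | hbs
      · exact hbp
      · exact absurd hb (lt_irrefl b)
      · exact absurd hb (hsort.2.1.1 b hbs)
    · rw [hstep]
      congr 1
      ext x
      simp [or_comm]

theorem IsLinExtListOn.pairwise_not_lt {S : Set P} {l : List P} (hl : IsLinExtListOn S l) :
    l.Pairwise (fun a b => ¬ b < a) :=
  List.pairwise_iff_get.mpr fun i j hij hji => (hl.2.2 j i hji).not_gt hij

theorem rowmotion_eq_comp_toggles_linear_extension_general
    (P : Type*) [PartialOrder P]
    (l : List P) (hl : IsLinExtListOn Set.univ l) :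
    RowJ (P := P) = listComp (l.map togFun) := by
  have hall : {x | x ∈ l} = Set.univ := Set.eq_univ_of_forall fun x => (hl.2.1 x).2 trivial
  funext I
  have hstates := listComp_togFun_ite I I [] l hl.1 hl.pairwise_not_lt
    (by simpa [hall] using isLowerSet_univ) (by simp [hall, Set.ite_univ])
  exact Subtype.ext (by simpa [Set.ite_empty] using hstates.symm)

/-- Order ideal rowmotion is the composition of all the order ideal toggles,
in the order given by any linear extension. -/
theorem rowmotion_eq_comp_toggles_linear_extension
    (P : Type*) [PartialOrder P] [Fintype P]
    (l : List P) (hl : IsLinExtListOn Set.univ l) :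
    RowJ (P := P) = listComp (l.map togFun) :=
  rowmotion_eq_comp_toggles_linear_extension_general P l hl
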